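/- Let (X_n) contain isomorphs of an infinite-dimensional Banach space X uniformly and 1 ≤ p < ∞. Then the set (Σ_n X_n)_p⁺ \ (Σ_n X_n)_p together with 0 contains a closed subspace of the Fréchet space (Σ_n X_n)_p⁺ of dimension dim X. -/

import Mathlib

open Filter Topology

/-!
Send `x` to `(a_n R_n x)_n` with the weights `a_n = (n + 1) ^ (-1/p)`. Since `‖R_n x‖` is
comparable to `‖x‖` uniformly in `n`, the image of `x ≠ 0` lies in `ℓ_q` exactly when
`∑ a_n ^ q = ∑ (n + 1) ^ (-q/p)` converges, i.e. when `q > p`. The coordinate `x ↦ R_0 x` is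
bounded below, so this map is a closed embedding of `X` even for the product topology, which is
coarser than the topology of `(Σ X_n)_p⁺`; its range is the required subspace.
-/

theorem Topology.IsClosedEmbedding.of_comp_of_continuous {X Y Z : Type*} [TopologicalSpace X]
    [TopologicalSpace Y] [TopologicalSpace Z] [T2Space Y] {f : X → Y} {g : Y → Z}
    (hf : Continuous f) (hg : Continuous g) (hgf : IsClosedEmbedding (g ∘ f)) :
    IsClosedEmbedding f where
  __ := IsEmbedding.of_comp hf hg hgf.isEmbedding
  isClosed_range := by
    refine closure_subset_iff_isClosed.mp fun y hy => ?_
    have : (comap f (𝓝 y)).NeBot :=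
      comap_neBot_iff_frequently.mpr (mem_closure_iff_frequently.mp hy)
    have hgy : g y ∈ Set.range (g ∘ f) :=
      hgf.isClosed_range.closure_subset <| by
        simpa only [Set.range_comp] using map_mem_closure hg hy (Set.mapsTo_image g _)
    obtain ⟨x, hx⟩ := hgy
    have hlx : Tendsto id (comap f (𝓝 y)) (𝓝 x) := by
      rw [hgf.tendsto_nhds_iff, Function.comp_id, hx]
      exact (hg.tendsto y).comp tendsto_comap
    exact ⟨x, tendsto_nhds_unique ((hf.tendsto x).comp hlx) tendsto_comap⟩

theorem Real.summable_rpow_of_le_mul {ι : Type*} {u v : ι → ℝ} {C q : ℝ} (hu : ∀ i, 0 ≤ u i)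
    (hv : ∀ i, 0 ≤ v i) (hC : 0 ≤ C) (huv : ∀ i, u i ≤ C * v i) (hq : 0 ≤ q)
    (hsum : Summable fun i => v i ^ q) : Summable fun i => u i ^ q := by
  refine .of_nonneg_of_le (fun i => Real.rpow_nonneg (hu i) q) (fun i => ?_)
    (hsum.mul_left (C ^ q))
  rw [← Real.mul_rpow hC (hv i)]
  exact Real.rpow_le_rpow (hu i) (huv i) hq

theorem summable_norm_sub_rpow {ι : Type*} {E : ι → Type*} [∀ i, NormedAddCommGroup (E i)]
    {f g : ∀ i, E i} {q : ℝ} (hq : 0 < q) (hf : Summable fun i => ‖f i‖ ^ q)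
    (hg : Summable fun i => ‖g i‖ ^ q) : Summable fun i => ‖f i - g i‖ ^ q := by
  have hq' : 0 < (ENNReal.ofReal q).toReal := by rwa [ENNReal.toReal_ofReal hq.le]
  have hf' : Memℓp f (ENNReal.ofReal q) :=
    (memℓp_gen_iff hq').mpr (by rwa [ENNReal.toReal_ofReal hq.le])
  have hg' : Memℓp g (ENNReal.ofReal q) :=
    (memℓp_gen_iff hq').mpr (by rwa [ENNReal.toReal_ofReal hq.le])
  simpa only [ENNReal.toReal_ofReal hq.le, Pi.sub_apply] using (memℓp_gen_iff hq').mp (hf'.sub hg')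

theorem tendsto_pi_nhds_of_tsum_norm_sub_rpow {ι : Type*} {E : ι → Type*}
    [∀ i, NormedAddCommGroup (E i)] {F : ℕ → ∀ i, E i} {z : ∀ i, E i} {q : ℝ} (hq : 0 < q)
    (hsum : ∀ j, Summable fun i => ‖F j i - z i‖ ^ q)
    (hlim : Tendsto (fun j => ∑' i, ‖F j i - z i‖ ^ q) atTop (𝓝 0)) :
    Tendsto F atTop (𝓝 z) := by
  refine tendsto_pi_nhds.mpr fun i => tendsto_iff_norm_sub_tendsto_zero.mpr ?_
  have hpow : Tendsto (fun j => ‖F j i - z i‖ ^ q) atTop (𝓝 0) :=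
    squeeze_zero (fun j => Real.rpow_nonneg (norm_nonneg _) q)
      (fun j => (hsum j).le_tsum i fun k _ => Real.rpow_nonneg (norm_nonneg _) q) hlim
  have hroot := hpow.rpow_const (p := q⁻¹) (Or.inr (inv_nonneg.mpr hq.le))
  rw [Real.zero_rpow (inv_ne_zero hq.ne')] at hroot
  refine hroot.congr fun j => ?_
  rw [← Real.rpow_mul (norm_nonneg _), mul_inv_cancel₀ hq.ne', Real.rpow_one]

noncomputable def powWeight (p : ℝ) (n : ℕ) : ℝ := ((n : ℝ) + 1) ^ (-p⁻¹)

theorem powWeight_pos (p : ℝ) (n : ℕ) : 0 < powWeight p n :=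
  Real.rpow_pos_of_pos (by positivity) _

@[simp]
theorem powWeight_zero (p : ℝ) : powWeight p 0 = 1 := by
  simp [powWeight]

theorem summable_powWeight_rpow_iff {p q : ℝ} (hp : 0 < p) :
    (Summable fun n => powWeight p n ^ q) ↔ p < q := by
  have hpow : (fun n => powWeight p n ^ q) = fun n : ℕ => ((n + 1 : ℕ) : ℝ) ^ (-(q / p)) := by
    ext n
    rw [powWeight, ← Real.rpow_mul (by positivity)]
    push_cast
    ring_nf
  rw [hpow, summable_nat_add_iff (f := fun n : ℕ => (n : ℝ) ^ (-(q / p))) 1,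
    Real.summable_nat_rpow, neg_lt_neg_iff, one_lt_div hp]

section WeightedEmbedding

variable {X : Type*} [NormedAddCommGroup X] [NormedSpace ℝ X]
  {Y : ℕ → Type*} [∀ n, NormedAddCommGroup (Y n)] [∀ n, NormedSpace ℝ (Y n)]

noncomputable def weightedEmbedding (p : ℝ) (R : ∀ n, X →L[ℝ] Y n) : X →L[ℝ] ∀ n, Y n :=
  ContinuousLinearMap.pi fun n => powWeight p n • R n

variable {p δ : ℝ} {R : ∀ n, X →L[ℝ] Y n}

theorem norm_weightedEmbedding_apply (x : X) (n : ℕ) :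
    ‖weightedEmbedding p R x n‖ = powWeight p n * ‖R n x‖ := by
  simp [weightedEmbedding, norm_smul, (powWeight_pos p n).le]

theorem summable_norm_weightedEmbedding_rpow (hR : ∀ n, ‖R n‖ ≤ δ) (hp : 0 < p) {q : ℝ}
    (hq : p < q) (x : X) : Summable fun n => ‖weightedEmbedding p R x n‖ ^ q := by
  refine Real.summable_rpow_of_le_mul (C := δ * ‖x‖) (fun n => norm_nonneg _)
    (fun n => (powWeight_pos p n).le) (mul_nonneg ((norm_nonneg _).trans (hR 0)) (norm_nonneg x))
    (fun n => ?_) (hp.trans hq).le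
    ((summable_powWeight_rpow_iff hp).mpr hq)
  rw [norm_weightedEmbedding_apply, mul_comm]
  exact mul_le_mul_of_nonneg_right (((R n).le_opNorm x).trans
    (mul_le_mul_of_nonneg_right (hR n) (norm_nonneg x))) (powWeight_pos p n).le

theorem not_summable_norm_weightedEmbedding_rpow (hδ : 0 ≤ δ)
    (hRinv : ∀ n x, ‖x‖ ≤ δ * ‖R n x‖) (hp : 0 < p) {x : X} (hx : x ≠ 0) :
    ¬ Summable fun n => ‖weightedEmbedding p R x n‖ ^ p := by
  intro hsum
  have hx' : 0 < ‖x‖ := norm_pos_iff.mpr hx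
  refine (lt_irrefl p) ((summable_powWeight_rpow_iff hp).mp ?_)
  refine Real.summable_rpow_of_le_mul (C := δ / ‖x‖) (fun n => (powWeight_pos p n).le)
    (fun n => norm_nonneg _) (by positivity) (fun n => ?_) hp.le hsum
  rw [norm_weightedEmbedding_apply, div_mul_eq_mul_div, le_div_iff₀ hx', mul_left_comm]
  exact mul_le_mul_of_nonneg_left (hRinv n x) (powWeight_pos p n).le

theorem antilipschitzWith_weightedEmbedding_apply_zero (hRinv : ∀ n x, ‖x‖ ≤ δ * ‖R n x‖) :
    AntilipschitzWith δ.toNNReal fun x => weightedEmbedding p R x 0 :=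
  ((ContinuousLinearMap.proj 0).comp (weightedEmbedding p R)).antilipschitz_of_bound fun x =>
    (hRinv 0 x).trans <| by
      simpa [weightedEmbedding] using
        mul_le_mul_of_nonneg_right (Real.le_coe_toNNReal δ) (norm_nonneg (R 0 x))

theorem isClosedEmbedding_weightedEmbedding [CompleteSpace X]
    (hRinv : ∀ n x, ‖x‖ ≤ δ * ‖R n x‖) :
    IsClosedEmbedding (weightedEmbedding p R) :=
  .of_comp_of_continuous (weightedEmbedding p R).continuous (continuous_apply 0)
    ((antilipschitzWith_weightedEmbedding_apply_zero hRinv).isClosedEmbedding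
      ((ContinuousLinearMap.proj 0).comp (weightedEmbedding p R)).uniformContinuous)

end WeightedEmbedding

theorem stmt18.{u, v} (X : Type u) [NormedAddCommGroup X] [NormedSpace ℝ X]
    [CompleteSpace X] (hX : ¬ FiniteDimensional ℝ X)
    (Y : ℕ → Type v) [∀ n, NormedAddCommGroup (Y n)] [∀ n, NormedSpace ℝ (Y n)]
    [∀ n, CompleteSpace (Y n)]
    (δ : ℝ) (hδ : 0 < δ) (R : ∀ n, X →L[ℝ] Y n)
    (hR : ∀ n, ‖R n‖ ≤ δ) (hRinv : ∀ n x, ‖x‖ ≤ δ * ‖R n x‖)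
    (p : ℝ) (hp : 1 ≤ p) :
    ∃ S : Submodule ℝ (∀ n, Y n),
      (∀ f ∈ S, ∀ q > p, Summable fun n => ‖f n‖ ^ q) ∧
      Cardinal.lift.{u} (Module.rank ℝ S) = Cardinal.lift.{v} (Module.rank ℝ X) ∧
      (∀ f ∈ S, f ≠ 0 → ¬ Summable fun n => ‖f n‖ ^ p) ∧
      (∀ z : ∀ n, Y n, (∀ q > p, Summable fun n => ‖z n‖ ^ q) →
        (∃ F : ℕ → ∀ n, Y n, (∀ j, F j ∈ S) ∧
          ∀ q > p, Tendsto (fun j => ∑' n, ‖F j n - z n‖ ^ q) atTop (𝓝 0)) →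
        z ∈ S) := by
  have hp0 : 0 < p := by linarith
  have hT := isClosedEmbedding_weightedEmbedding (p := p) hRinv
  set T := weightedEmbedding p R
  have hsum : ∀ f ∈ Set.range T, ∀ q > p, Summable fun n => ‖f n‖ ^ q := by
    rintro _ ⟨x, rfl⟩ q hq
    exact summable_norm_weightedEmbedding_rpow hR hp0 hq x
  refine ⟨(T : X →ₗ[ℝ] ∀ n, Y n).range, fun f hf => hsum f hf, ?_, ?_, ?_⟩
  · exact (LinearEquiv.ofInjective (T : X →ₗ[ℝ] ∀ n, Y n) hT.injective).lift_rank_eq.symm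
  · rintro _ ⟨x, rfl⟩ hTx
    exact not_summable_norm_weightedEmbedding_rpow hδ.le hRinv hp0 (by rintro rfl; simp at hTx)
  · rintro z hz ⟨F, hFT, hF⟩
    have hq : p < p + 1 := lt_add_one p
    have hlim : Tendsto F atTop (𝓝 z) :=
      tendsto_pi_nhds_of_tsum_norm_sub_rpow (hp0.trans hq)
        (fun j => summable_norm_sub_rpow (hp0.trans hq) (hsum _ (hFT j) _ hq) (hz _ hq))
        (hF _ hq)
    exact hT.isClosed_range.mem_of_tendsto hlim (Eventually.of_forall hFT)
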